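/- arXiv:2201.11411 — 4 statements merged into one kernel-verified Lean document; each statement's English description precedes it below -/
import Mathlib

section
/- If f has L-Lipschitz gradient, η ≤ 1/(4L), y = x + (1-θ)(x - x_prev) for θ ∈ [0,1], and x⁺ = y - η∇f(y), then f(x⁺) - f(x) ≤ (5/(8η))‖x - x_prev‖² - (1/(2η))‖x⁺ - x‖² - (3η/8)‖∇f(y)‖². -/
/-!
A Lipschitz gradient gives the two-sided quadratic bound
`|f b - f a - ⟪∇f a, b - a⟫| ≤ L/2 ‖b - a‖²`. Its upper half for the gradient step from `y` and its
lower half between `y` and `x` give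
`f x⁺ - f x ≤ ⟪∇f y, y - x⟫ - η (1 - Lη/2) ‖∇f y‖² + L/2 ‖y - x‖²`. Expanding
`‖x⁺ - x‖² = ‖y - x‖² - 2η ⟪∇f y, y - x⟫ + η² ‖∇f y‖²`, the claim follows from `Lη ≤ 1/4` and
`‖y - x‖ = (1 - θ) ‖x - x_prev‖ ≤ ‖x - x_prev‖`.
-/

open RealInnerProductSpace

section Fderiv

variable {E F : Type*} [NormedAddCommGroup E] [NormedSpace ℝ E]
  [NormedAddCommGroup F] [NormedSpace ℝ F]

theorem norm_image_sub_sub_fderiv_le_of_lipschitz {f : E → F} {f' : E → E →L[ℝ] F} {L : ℝ}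
    (hf : ∀ x, HasFDerivAt f (f' x) x) (hlip : ∀ x y, ‖f' x - f' y‖ ≤ L * ‖x - y‖) (a b : E) :
    ‖f b - f a - f' a (b - a)‖ ≤ L / 2 * ‖b - a‖ ^ 2 := by
  set v := b - a
  let g : ℝ → F := fun t => f (a + t • v) - f a - t • f' a v
  have hg : ∀ t, HasDerivAt g (f' (a + t • v) v - f' a v) t := fun t => by
    have hline : HasDerivAt (fun s : ℝ => a + s • v) v t := by
      simpa using ((hasDerivAt_id t).smul_const v).const_add a
    exact (((hf _).comp_hasDerivAt t hline).sub_const (f a)).sub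
      (by simpa using (hasDerivAt_id t).smul_const (f' a v))
  have hB : ∀ t, HasDerivAt (fun s : ℝ => L / 2 * ‖v‖ ^ 2 * s ^ 2) (L * ‖v‖ ^ 2 * t) t := fun t =>
    ((hasDerivAt_pow 2 t).const_mul (L / 2 * ‖v‖ ^ 2)).congr_deriv (by ring)
  have hbound : ∀ t ∈ Set.Ico (0 : ℝ) 1, ‖f' (a + t • v) v - f' a v‖ ≤ L * ‖v‖ ^ 2 * t := by
    rintro t ⟨ht, -⟩
    calc ‖f' (a + t • v) v - f' a v‖ = ‖(f' (a + t • v) - f' a) v‖ := rfl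
      _ ≤ ‖f' (a + t • v) - f' a‖ * ‖v‖ := ContinuousLinearMap.le_opNorm _ _
      _ ≤ L * ‖(a + t • v) - a‖ * ‖v‖ := by gcongr; exact hlip _ _
      _ = L * ‖v‖ ^ 2 * t := by
        rw [add_sub_cancel_left, norm_smul, Real.norm_of_nonneg ht]; ring
  have := image_norm_le_of_norm_deriv_right_le_deriv_boundary
    (fun t _ => (hg t).continuousAt.continuousWithinAt) (fun t _ => (hg t).hasDerivWithinAt)
    (by simp [g]) hB hbound (Set.right_mem_Icc.2 zero_le_one)
  simpa [g, v] using this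

end Fderiv

section Gradient

variable {E : Type*} [NormedAddCommGroup E] [InnerProductSpace ℝ E] [CompleteSpace E]

theorem abs_image_sub_sub_inner_gradient_le_of_lipschitz {f : E → ℝ} {f' : E → E} {L : ℝ}
    (hf : ∀ x, HasGradientAt f (f' x) x) (hlip : ∀ x y, ‖f' x - f' y‖ ≤ L * ‖x - y‖) (a b : E) :
    |f b - f a - ⟪f' a, b - a⟫| ≤ L / 2 * ‖b - a‖ ^ 2 := by
  have hlip' : ∀ x y, ‖InnerProductSpace.toDual ℝ E (f' x) - InnerProductSpace.toDual ℝ E (f' y)‖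
      ≤ L * ‖x - y‖ := fun x y => by
    rw [← map_sub, LinearIsometryEquiv.norm_map]; exact hlip x y
  simpa using norm_image_sub_sub_fderiv_le_of_lipschitz (fun x => (hf x).hasFDerivAt) hlip' a b


theorem image_sub_smul_gradient_le_of_lipschitz {f : E → ℝ} {f' : E → E} {L : ℝ}
    (hf : ∀ x, HasGradientAt f (f' x) x) (hlip : ∀ x y, ‖f' x - f' y‖ ≤ L * ‖x - y‖)
    (a : E) (η : ℝ) :
    f (a - η • f' a) ≤ f a - η * ‖f' a‖ ^ 2 + L / 2 * η ^ 2 * ‖f' a‖ ^ 2 := by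
  have h := (abs_le.1 (abs_image_sub_sub_inner_gradient_le_of_lipschitz hf hlip a
    (a - η • f' a))).2
  rw [sub_sub_cancel_left, norm_neg, norm_smul, Real.norm_eq_abs, mul_pow, sq_abs, inner_neg_right,
    real_inner_smul_right, real_inner_self_eq_norm_sq] at h
  linarith

end Gradient

theorem stmt_1_general {d : ℕ} (f : EuclideanSpace ℝ (Fin d) → ℝ)
    (f' : EuclideanSpace ℝ (Fin d) → EuclideanSpace ℝ (Fin d))
    (L η θ : ℝ)
    (hgrad : ∀ x, HasGradientAt f (f' x) x)
    (hlip : ∀ x y, ‖f' x - f' y‖ ≤ L * ‖x - y‖)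
    (hη0 : 0 < η) (hη : η ≤ 1 / (4 * L))
    (hθ0 : 0 ≤ θ) (hθ1 : θ ≤ 1)
    (x xprev y xp : EuclideanSpace ℝ (Fin d))
    (hy : y = x + (1 - θ) • (x - xprev))
    (hxp : xp = y - η • f' y) :
    f xp - f x ≤ (5 / (8 * η)) * ‖x - xprev‖ ^ 2
      - (1 / (2 * η)) * ‖xp - x‖ ^ 2 - (3 * η / 8) * ‖f' y‖ ^ 2 := by
  have hLη : L * η ≤ 1 / 4 := by
    rcases le_or_gt L 0 with hL | hL
    · nlinarith
    · rw [le_div_iff₀ (by positivity)] at hη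
      linarith
  have hmomentum : ‖y - x‖ ^ 2 ≤ ‖x - xprev‖ ^ 2 := by
    rw [hy, add_sub_cancel_left, norm_smul, Real.norm_of_nonneg (by linarith), mul_pow]
    exact mul_le_of_le_one_left (by positivity) (pow_le_one₀ (by linarith) (by linarith))
  have hstep := image_sub_smul_gradient_le_of_lipschitz hgrad hlip y η
  have hlower := (abs_le.1 (abs_image_sub_sub_inner_gradient_le_of_lipschitz hgrad hlip y x)).1
  rw [← neg_sub y x, norm_neg, inner_neg_right] at hlower
  have hdist : ‖xp - x‖ ^ 2 = ‖y - x‖ ^ 2 - 2 * η * ⟪f' y, y - x⟫ + η ^ 2 * ‖f' y‖ ^ 2 := by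
    rw [hxp, sub_right_comm, norm_sub_sq_real, real_inner_smul_right, norm_smul,
      Real.norm_of_nonneg hη0.le, real_inner_comm]
    ring
  have hcoef : L / 2 + 1 / (2 * η) ≤ 5 / (8 * η) := by
    rw [div_add_div _ _ two_ne_zero (by positivity), div_le_div_iff₀ (by positivity) (by positivity)]
    nlinarith
  have hU := mul_le_mul hcoef hmomentum (sq_nonneg _) (by positivity)
  have hG : L / 2 * η ^ 2 * ‖f' y‖ ^ 2 ≤ η / 8 * ‖f' y‖ ^ 2 := by
    gcongr
    nlinarith
  have hcancel : 1 / (2 * η) * (2 * η * ⟪f' y, y - x⟫ - η ^ 2 * ‖f' y‖ ^ 2)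
      = ⟪f' y, y - x⟫ - η / 2 * ‖f' y‖ ^ 2 := by
    field_simp
  rw [← hxp] at hstep
  rw [hdist]
  linarith

/-- One AGD step descent inequality: with y = x + (1-θ)(x - x_prev) and
x⁺ = y - η∇f(y), we have
f(x⁺) - f(x) ≤ (5/(8η))‖x - x_prev‖² - (1/(2η))‖x⁺ - x‖² - (3η/8)‖∇f(y)‖². -/
theorem stmt_1 {d : ℕ} (f : EuclideanSpace ℝ (Fin d) → ℝ)
    (f' : EuclideanSpace ℝ (Fin d) → EuclideanSpace ℝ (Fin d))
    (L η θ : ℝ) (hL : 0 < L)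
    (hgrad : ∀ x, HasGradientAt f (f' x) x)
    (hlip : ∀ x y, ‖f' x - f' y‖ ≤ L * ‖x - y‖)
    (hη0 : 0 < η) (hη : η ≤ 1 / (4 * L))
    (hθ0 : 0 ≤ θ) (hθ1 : θ ≤ 1)
    (x xprev y xp : EuclideanSpace ℝ (Fin d))
    (hy : y = x + (1 - θ) • (x - xprev))
    (hxp : xp = y - η • f' y) :
    f xp - f x ≤ (5 / (8 * η)) * ‖x - xprev‖ ^ 2
      - (1 / (2 * η)) * ‖xp - x‖ ^ 2 - (3 * η / 8) * ‖f' y‖ ^ 2 :=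
  stmt_1_general f f' L η θ hgrad hlip hη0 hη hθ0 hθ1 x xprev y xp hy hxp
end

section
/- Let g(x) = ⟨b, x - x⁰⟩ + (λ/2)(x - x⁰)² be a scalar quadratic with -θ/η ≤ λ ≤ L and L ≤ 1/(4η), 0 < θ ≤ 1. Consider the perturbed AGD iteration y^k = x^k + (1-θ)(x^k - x^{k-1}), x^{k+1} = y^k - η g'(y^k) - η δ^k with x^{-1} = x^0. Define ℓ^{k+1} = g(x^{k+1}) + ((1+θ)(1-θ)²/(2η))|x^{k+1} - x^k|². Then for each k: ℓ^{k+1} ≤ ℓ^k - (3θ/(8η))|x^{k+1} - x^k|² + (2η/θ)|δ^k|². -/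
/-!
Write `p = x^{k+1} - x^k`, `q = x^k - x^{k-1}`, `e = η δ^k` and `μ = η λ ∈ [-θ, 1]`. Since `g` is
quadratic, the step rule gives `η g'(x^k) = (1 - θ)(1 - μ) q - p - e` exactly, and
`η (ℓ^{k+1} - ℓ^k)` becomes a quadratic form in `(p, q, e)`. Two applications of AM-GM bound it:
`-p e ≤ θ p²/8 + 2 e²/θ` absorbs the perturbation, and
`2 (1 - θ)(1 - μ) p q ≤ (1 - μ)(p² + (1 - θ)² q²)` is paid for by the momentum term, because
`1 - μ ≤ 1 + θ`; what is left of the `p²` coefficient is `≤ 0` since `(1 + θ)(1 - θ)² + θ ≤ 1`.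
-/

noncomputable def scalarQuadratic (b x0 l x : ℝ) : ℝ := b * (x - x0) + l / 2 * (x - x0) ^ 2

lemma hasDerivAt_scalarQuadratic (b x0 l x : ℝ) :
    HasDerivAt (scalarQuadratic b x0 l) (b + l * (x - x0)) x := by
  have hlin : HasDerivAt (fun x : ℝ => x - x0) 1 x := (hasDerivAt_id x).sub_const x0
  exact ((hlin.const_mul b).fun_add ((hlin.fun_pow 2).const_mul (l / 2))).congr_deriv
    (by push_cast; ring)

lemma deriv_scalarQuadratic (b x0 l x : ℝ) :
    deriv (scalarQuadratic b x0 l) x = b + l * (x - x0) :=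
  (hasDerivAt_scalarQuadratic b x0 l x).deriv

lemma scalarQuadratic_sub (b x0 l x y : ℝ) :
    scalarQuadratic b x0 l y - scalarQuadratic b x0 l x
      = deriv (scalarQuadratic b x0 l) x * (y - x) + l / 2 * (y - x) ^ 2 := by
  rw [deriv_scalarQuadratic, scalarQuadratic, scalarQuadratic]
  ring

lemma agd_quadratic_form_le {θ μ : ℝ} (hθ0 : 0 < θ) (hθ1 : θ ≤ 1) (hμθ : -θ ≤ μ) (hμ1 : μ ≤ 1)
    (p q e : ℝ) :
    p * ((1 - θ) * (1 - μ) * q - p - e) + μ / 2 * p ^ 2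
        + (1 + θ) * (1 - θ) ^ 2 / 2 * (p ^ 2 - q ^ 2)
      ≤ -(3 * θ / 8) * p ^ 2 + 2 / θ * e ^ 2 := by
  have hnoise : -(p * e) ≤ θ / 8 * p ^ 2 + 2 / θ * e ^ 2 := by
    have hsq : θ / 8 * p ^ 2 + 2 / θ * e ^ 2 + p * e = (θ * p + 4 * e) ^ 2 / (8 * θ) := by
      field_simp
      ring
    have : 0 ≤ (θ * p + 4 * e) ^ 2 / (8 * θ) := by positivity
    linarith
  have hcross :
      (1 - θ) * (1 - μ) * p * q ≤ (1 - μ) / 2 * p ^ 2 + (1 + θ) * (1 - θ) ^ 2 / 2 * q ^ 2 := by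
    linear_combination (1 / 2) * mul_nonneg (sub_nonneg.2 hμ1) (sq_nonneg (p - (1 - θ) * q))
      + (1 / 2) * mul_nonneg (neg_le_iff_add_nonneg.1 hμθ) (sq_nonneg ((1 - θ) * q))
  have hcoef : (1 + θ) * (1 - θ) ^ 2 + θ ≤ 1 := by
    linear_combination mul_nonneg (sq_nonneg θ) (sub_nonneg.2 hθ1)
  linear_combination hnoise + hcross + (p ^ 2 / 2) * hcoef

theorem scalarQuadratic_agd_potential_le {b x0 l η θ u v w δ : ℝ} (hη0 : 0 < η) (hθ0 : 0 < θ)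
    (hθ1 : θ ≤ 1) (hμθ : -θ ≤ η * l) (hμ1 : η * l ≤ 1)
    (hw : w = v + (1 - θ) * (v - u)
      - η * deriv (scalarQuadratic b x0 l) (v + (1 - θ) * (v - u)) - η * δ) :
    scalarQuadratic b x0 l w + (1 + θ) * (1 - θ) ^ 2 / (2 * η) * (w - v) ^ 2
      ≤ scalarQuadratic b x0 l v + (1 + θ) * (1 - θ) ^ 2 / (2 * η) * (v - u) ^ 2
        - 3 * θ / (8 * η) * (w - v) ^ 2 + 2 * η / θ * δ ^ 2 := by
  have hgrad : η * deriv (scalarQuadratic b x0 l) v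
      = (1 - θ) * (1 - η * l) * (v - u) - (w - v) - η * δ := by
    rw [deriv_scalarQuadratic] at hw ⊢
    linear_combination hw
  have key := agd_quadratic_form_le hθ0 hθ1 hμθ hμ1 (w - v) (v - u) (η * δ)
  rw [← hgrad] at key
  linear_combination (norm := skip) (1 / η) * key + scalarQuadratic_sub b x0 l v w
  apply le_of_eq
  field_simp
  ring

lemma mul_le_one_quarter_of_le_one_div {η l L : ℝ} (hη0 : 0 < η) (hη : η ≤ 1 / (4 * L))
    (hl : l ≤ L) : η * l ≤ 1 / 4 := by
  have h4L : 0 < 4 * L := one_div_pos.1 (hη0.trans_le hη)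
  have hηL : η * (4 * L) ≤ 1 := (le_div_iff₀ h4L).1 hη
  linarith [mul_le_mul_of_nonneg_left hl hη0.le]

theorem stmt_5_general (b x0 l L η θ : ℝ) (hη0 : 0 < η) (hη : η ≤ 1 / (4 * L))
    (hθ0 : 0 < θ) (hθ1 : θ ≤ 1) (hl1 : -(θ / η) ≤ l) (hl2 : l ≤ L)
    (g : ℝ → ℝ) (hg : g = fun x => b * (x - x0) + l / 2 * (x - x0) ^ 2)
    (X y δ : ℕ → ℝ)
    (hy : ∀ k, y k = X (k + 1) + (1 - θ) * (X (k + 1) - X k))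
    (hstep : ∀ k, X (k + 2) = y k - η * deriv g (y k) - η * δ k) :
    ∀ k, g (X (k + 2)) + ((1 + θ) * (1 - θ) ^ 2 / (2 * η)) * |X (k + 2) - X (k + 1)| ^ 2
      ≤ g (X (k + 1)) + ((1 + θ) * (1 - θ) ^ 2 / (2 * η)) * |X (k + 1) - X k| ^ 2
        - (3 * θ / (8 * η)) * |X (k + 2) - X (k + 1)| ^ 2 + (2 * η / θ) * |δ k| ^ 2 := by
  have hg' : g = scalarQuadratic b x0 l := hg
  subst hg'
  have hμθ : -θ ≤ η * l := (div_le_iff₀' hη0).1 (by rwa [neg_div])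
  have hμ1 : η * l ≤ 1 := (mul_le_one_quarter_of_le_one_div hη0 hη hl2).trans (by norm_num)
  intro k
  simp only [sq_abs]
  exact scalarQuadratic_agd_potential_le hη0 hθ0 hθ1 hμθ hμ1 (hy k ▸ hstep k)

/-- Potential decrease for the perturbed scalar AGD iteration on the quadratic
g(x) = b(x - x⁰) + (λ/2)(x - x⁰)², when -θ/η ≤ λ ≤ L.
Here `X (k+1)` denotes the iterate x^k (so `X 0 = x^{-1}`), and the initial
condition x^{-1} = x^0 reads `X 0 = X 1`.  With the potential
ℓ^{k+1} = g(x^{k+1}) + ((1+θ)(1-θ)²/(2η))|x^{k+1}-x^k|², for each k: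
ℓ^{k+1} ≤ ℓ^k - (3θ/(8η))|x^{k+1}-x^k|² + (2η/θ)|δ^k|². -/
theorem stmt_5 (b x0 l L η θ : ℝ) (hL : 0 ≤ L) (hη0 : 0 < η) (hη : η ≤ 1 / (4 * L))
    (hθ0 : 0 < θ) (hθ1 : θ ≤ 1) (hl1 : -(θ / η) ≤ l) (hl2 : l ≤ L)
    (g : ℝ → ℝ) (hg : g = fun x => b * (x - x0) + l / 2 * (x - x0) ^ 2)
    (X y δ : ℕ → ℝ)
    (hinit : X 0 = X 1)
    (hy : ∀ k, y k = X (k + 1) + (1 - θ) * (X (k + 1) - X k))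
    (hstep : ∀ k, X (k + 2) = y k - η * deriv g (y k) - η * δ k) :
    ∀ k, g (X (k + 2)) + ((1 + θ) * (1 - θ) ^ 2 / (2 * η)) * |X (k + 2) - X (k + 1)| ^ 2
      ≤ g (X (k + 1)) + ((1 + θ) * (1 - θ) ^ 2 / (2 * η)) * |X (k + 1) - X k| ^ 2
        - (3 * θ / (8 * η)) * |X (k + 2) - X (k + 1)| ^ 2 + (2 * η / θ) * |δ k| ^ 2 :=
  stmt_5_general b x0 l L η θ hη0 hη hθ0 hθ1 hl1 hl2 g hg X y δ hy hstep
end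

section
/- If x^0, …, x^K ∈ ℝ^d satisfy k·Σ_{t=0}^{k-1}‖x^{t+1}-x^t‖² ≤ B² for all k ≤ K, and K₀ = argmin_{⌊K/2⌋ ≤ k ≤ K-1} ‖x^{k+1}-x^k‖, then ‖x^{K₀+1}-x^{K₀}‖² ≤ 2B²/K². -/
/-- If k·Σ_{t=0}^{k-1}‖x^{t+1}-x^t‖² ≤ B² for all 1 ≤ k ≤ K and K₀ minimizes
‖x^{k+1}-x^k‖ over ⌊K/2⌋ ≤ k ≤ K-1, then ‖x^{K₀+1}-x^{K₀}‖² ≤ 2B²/K². -/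
theorem stmt_8 {d : ℕ} (x : ℕ → EuclideanSpace ℝ (Fin d)) (K : ℕ) (hK : 1 ≤ K)
    (B : ℝ) (hB : 0 < B)
    (hbound : ∀ k, 1 ≤ k → k ≤ K →
      (k : ℝ) * ∑ t ∈ Finset.range k, ‖x (t + 1) - x t‖ ^ 2 ≤ B ^ 2)
    (K₀ : ℕ) (hK₀mem : K₀ ∈ Finset.Icc (K / 2) (K - 1))
    (hK₀min : ∀ k ∈ Finset.Icc (K / 2) (K - 1),
      ‖x (K₀ + 1) - x K₀‖ ≤ ‖x (k + 1) - x k‖) :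
    ‖x (K₀ + 1) - x K₀‖ ^ 2 ≤ 2 * B ^ 2 / (K : ℝ) ^ 2 := by
  set a : ℕ → ℝ := fun k => ‖x (k + 1) - x k‖ ^ 2 with ha
  have hKpos : (0:ℝ) < K := by exact_mod_cast hK
  have hKsum : (K : ℝ) * ∑ t ∈ Finset.range K, a t ≤ B ^ 2 := hbound K hK le_rfl
  have hsub : Finset.Icc (K / 2) (K - 1) ⊆ Finset.range K := by
    intro k hk
    simp only [Finset.mem_Icc] at hk
    simp only [Finset.mem_range]
    omega
  have hIcc_le : ∑ k ∈ Finset.Icc (K / 2) (K - 1), a k ≤ ∑ t ∈ Finset.range K, a t := by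
    apply Finset.sum_le_sum_of_subset_of_nonneg hsub
    intro i _ _
    positivity
  have hcard : ((Finset.Icc (K / 2) (K - 1)).card) • a K₀ ≤
      ∑ k ∈ Finset.Icc (K / 2) (K - 1), a k := by
    apply Finset.card_nsmul_le_sum
    intro k hk
    have := hK₀min k hk
    have h0 : (0:ℝ) ≤ ‖x (K₀ + 1) - x K₀‖ := norm_nonneg _
    simpa [ha] using pow_le_pow_left₀ h0 this 2
  have hcardval : (Finset.Icc (K / 2) (K - 1)).card = K - K / 2 := by
    rw [Nat.card_Icc]; omega
  have hcast : ((K - K / 2 : ℕ) : ℝ) = (K : ℝ) - (K / 2 : ℕ) := by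
    have : K / 2 ≤ K := Nat.div_le_self K 2
    exact Nat.cast_sub this
  have hhalf : ((K / 2 : ℕ) : ℝ) ≤ (K : ℝ) / 2 := Nat.cast_div_le
  have ha0 : 0 ≤ a K₀ := by positivity
  have hmain : ((K : ℝ) - (K / 2 : ℕ)) * a K₀ ≤ B ^ 2 / K := by
    rw [le_div_iff₀ hKpos]
    have h1 : ((K - K / 2 : ℕ) : ℝ) * a K₀ ≤ ∑ t ∈ Finset.range K, a t := by
      calc ((K - K / 2 : ℕ) : ℝ) * a K₀
          = ((Finset.Icc (K / 2) (K - 1)).card) • a K₀ := by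
            rw [hcardval, nsmul_eq_mul]
        _ ≤ ∑ k ∈ Finset.Icc (K / 2) (K - 1), a k := hcard
        _ ≤ ∑ t ∈ Finset.range K, a t := hIcc_le
    rw [← hcast]
    nlinarith
  have hnorm : a K₀ = ‖x (K₀ + 1) - x K₀‖ ^ 2 := rfl
  rw [hnorm] at hmain ha0
  rw [le_div_iff₀ hKpos] at hmain
  rw [le_div_iff₀ (by positivity : (0:ℝ) < (K:ℝ) ^ 2)]
  nlinarith [mul_nonneg (mul_nonneg ha0 hKpos.le) (sub_nonneg.mpr hhalf)]
end

section
/- If f has L-Lipschitz gradient, η ≤ 1/(4L), θ ∈ [0,1], and the heavy ball update x^{k+1} = x^k - η∇f(x^k) + (1-θ)(x^k - x^{k-1}) is performed, then f(x^{k+1}) ≤ f(x^k) - (η/4)‖∇f(x^k)‖² + (3/(4η))‖x^k - x^{k-1}‖². -/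
/-!
Along the segment from `x` to `y`, the derivative of `f` differs from `⟪∇f x, y - x⟫` by at most
`L t ‖y - x‖²`, which integrates to the descent lemma
`f y ≤ f x + ⟪∇f x, y - x⟫ + (L/2)‖y - x‖²`. For the heavy ball step `y - x = c v - η ∇f x` with
`|c| ≤ 1`, the cross term `c ⟪∇f x, v⟫` is split by Young's inequality with weight `η`, and
`‖y - x‖² ≤ 2‖c v‖² + 2η²‖∇f x‖²`; the condition `Lη ≤ 1/4` then makes the quadratic term cost
at most `(η/4)‖∇f x‖² + ‖v‖²/(4η)`.
-/

open scoped RealInnerProductSpace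

section LipschitzGradient

variable {E : Type*} [NormedAddCommGroup E] [InnerProductSpace ℝ E] [CompleteSpace E]
  {f : E → ℝ} {f' : E → E} {L : ℝ}

theorem HasGradientAt.hasDerivAt_comp_add_smul {g x v : E} {t : ℝ}
    (h : HasGradientAt f g (x + t • v)) :
    HasDerivAt (fun s : ℝ => f (x + s • v)) ⟪g, v⟫ t := by
  have hline : HasDerivAt (fun s : ℝ => x + s • v) v t := by
    simpa using ((hasDerivAt_id t).smul_const v).const_add x
  have hcomp := h.hasFDerivAt.comp_hasDerivAt t hline
  simp only [InnerProductSpace.toDual_apply_apply] at hcomp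
  exact hcomp

omit [CompleteSpace E] in
theorem inner_sub_gradient_le (hlip : ∀ x y, ‖f' x - f' y‖ ≤ L * ‖x - y‖) (x v : E) {t : ℝ}
    (ht : 0 ≤ t) : ⟪f' (x + t • v), v⟫ - ⟪f' x, v⟫ ≤ L * t * ‖v‖ ^ 2 := by
  rw [← inner_sub_left]
  calc ⟪f' (x + t • v) - f' x, v⟫ ≤ ‖f' (x + t • v) - f' x‖ * ‖v‖ := real_inner_le_norm _ _
    _ ≤ L * ‖t • v‖ * ‖v‖ := by
        gcongr
        simpa using hlip (x + t • v) x
    _ = L * t * ‖v‖ ^ 2 := by rw [norm_smul, Real.norm_of_nonneg ht]; ring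

theorem descent_lemma (hgrad : ∀ x, HasGradientAt f (f' x) x)
    (hlip : ∀ x y, ‖f' x - f' y‖ ≤ L * ‖x - y‖) (x y : E) :
    f y ≤ f x + ⟪f' x, y - x⟫ + L / 2 * ‖y - x‖ ^ 2 := by
  set v := y - x
  set φ : ℝ → ℝ := fun t => f (x + t • v) - t * ⟪f' x, v⟫ - L / 2 * t ^ 2 * ‖v‖ ^ 2
  have hφ' : ∀ t, HasDerivAt φ (⟪f' (x + t • v), v⟫ - ⟪f' x, v⟫ - L * t * ‖v‖ ^ 2) t := by
    intro t
    have hlin : HasDerivAt (fun t : ℝ => t * ⟪f' x, v⟫) ⟪f' x, v⟫ t := by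
      simpa using (hasDerivAt_id t).mul_const ⟪f' x, v⟫
    have hquad : HasDerivAt (fun t : ℝ => L / 2 * t ^ 2 * ‖v‖ ^ 2) (L * t * ‖v‖ ^ 2) t :=
      (((hasDerivAt_pow 2 t).const_mul (L / 2)).mul_const _).congr_deriv <| by
        simp only [Nat.cast_ofNat, Nat.add_one_sub_one, pow_one]; ring
    exact ((hgrad _).hasDerivAt_comp_add_smul.sub hlin).sub hquad
  have hanti : AntitoneOn φ (Set.Icc 0 1) := by
    refine antitoneOn_of_hasDerivWithinAt_nonpos (convex_Icc 0 1)
      (fun t _ => (hφ' t).continuousAt.continuousWithinAt)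
      (fun t _ => (hφ' t).hasDerivWithinAt) fun t ht => ?_
    rw [interior_Icc] at ht
    linarith [inner_sub_gradient_le hlip x v ht.1.le]
  have hφ01 := hanti (Set.left_mem_Icc.2 zero_le_one) (Set.right_mem_Icc.2 zero_le_one)
    zero_le_one
  simp only [φ, v, zero_smul, one_smul, add_zero, add_sub_cancel] at hφ01
  linarith

end LipschitzGradient

section HeavyBall

theorem norm_sub_sq_le_two_mul {E : Type*} [SeminormedAddCommGroup E] (a b : E) :
    ‖a - b‖ ^ 2 ≤ 2 * ‖a‖ ^ 2 + 2 * ‖b‖ ^ 2 := by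
  nlinarith [norm_sub_le a b, norm_nonneg (a - b), sq_nonneg (‖a‖ - ‖b‖)]

variable {E : Type*} [NormedAddCommGroup E] [InnerProductSpace ℝ E]

theorem real_inner_le_young {η : ℝ} (hη : 0 < η) (a b : E) :
    ⟪a, b⟫ ≤ η / 2 * ‖a‖ ^ 2 + 1 / (2 * η) * ‖b‖ ^ 2 := by
  have hab : η * ‖a‖ * ‖b‖ ≤ (η * ‖a‖) ^ 2 / 2 + ‖b‖ ^ 2 / 2 := by
    nlinarith [sq_nonneg (η * ‖a‖ - ‖b‖)]
  calc ⟪a, b⟫ ≤ ‖a‖ * ‖b‖ := real_inner_le_norm a b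
    _ = η * ‖a‖ * ‖b‖ / η := by field_simp
    _ ≤ ((η * ‖a‖) ^ 2 / 2 + ‖b‖ ^ 2 / 2) / η := by gcongr
    _ = η / 2 * ‖a‖ ^ 2 + 1 / (2 * η) * ‖b‖ ^ 2 := by field_simp

variable [CompleteSpace E] {f : E → ℝ} {f' : E → E} {L : ℝ}

theorem heavyBall_step_le (hgrad : ∀ x, HasGradientAt f (f' x) x)
    (hlip : ∀ x y, ‖f' x - f' y‖ ≤ L * ‖x - y‖) {η c : ℝ} (hL : 0 ≤ L) (hη : 0 < η)
    (hLη : L * η ≤ 1 / 4) (hc : |c| ≤ 1) (x v : E) :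
    f (x - η • f' x + c • v) ≤ f x - η / 4 * ‖f' x‖ ^ 2 + 3 / (4 * η) * ‖v‖ ^ 2 := by
  have hstep : x - η • f' x + c • v - x = c • v - η • f' x := by abel
  have hdesc := descent_lemma hgrad hlip x (x - η • f' x + c • v)
  rw [hstep, inner_sub_right, real_inner_smul_right, real_inner_smul_right,
    real_inner_self_eq_norm_sq] at hdesc
  set g := f' x
  have hyoung := real_inner_le_young hη g (c • v)
  rw [real_inner_smul_right] at hyoung
  have hsplit := norm_sub_sq_le_two_mul (c • v) (η • g)
  rw [norm_smul η, Real.norm_of_nonneg hη.le] at hsplit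
  have hcv : ‖c • v‖ ^ 2 ≤ ‖v‖ ^ 2 := by
    rw [norm_smul, mul_pow, Real.norm_eq_abs, sq_abs]
    exact mul_le_of_le_one_left (sq_nonneg _) ((sq_le_one_iff_abs_le_one c).2 hc)
  have hcurv : L / 2 * ‖c • v - η • g‖ ^ 2 ≤ η / 4 * ‖g‖ ^ 2 + 1 / (4 * η) * ‖c • v‖ ^ 2 := by
    have hL' : L ≤ 1 / (4 * η) := by rw [le_div_iff₀ (by positivity)]; linarith
    calc L / 2 * ‖c • v - η • g‖ ^ 2 ≤ L * ‖c • v‖ ^ 2 + L * η * (η * ‖g‖ ^ 2) := by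
          nlinarith [mul_le_mul_of_nonneg_left hsplit hL]
      _ ≤ 1 / (4 * η) * ‖c • v‖ ^ 2 + 1 / 4 * (η * ‖g‖ ^ 2) := by gcongr
      _ = η / 4 * ‖g‖ ^ 2 + 1 / (4 * η) * ‖c • v‖ ^ 2 := by ring
  have hcoef : 1 / (2 * η) * ‖c • v‖ ^ 2 + 1 / (4 * η) * ‖c • v‖ ^ 2
      = 3 / (4 * η) * ‖c • v‖ ^ 2 := by ring
  have hcv' : 3 / (4 * η) * ‖c • v‖ ^ 2 ≤ 3 / (4 * η) * ‖v‖ ^ 2 := by gcongr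
  linarith

end HeavyBall

theorem stmt_9_general {d : ℕ} (f : EuclideanSpace ℝ (Fin d) → ℝ)
    (f' : EuclideanSpace ℝ (Fin d) → EuclideanSpace ℝ (Fin d))
    (L η θ : ℝ)
    (hgrad : ∀ x, HasGradientAt f (f' x) x)
    (hlip : ∀ x y, ‖f' x - f' y‖ ≤ L * ‖x - y‖)
    (hη0 : 0 < η) (hη : η ≤ 1 / (4 * L))
    (hθ0 : 0 ≤ θ) (hθ1 : θ ≤ 1)
    (xprev xk xnext : EuclideanSpace ℝ (Fin d))
    (hstep : xnext = xk - η • f' xk + (1 - θ) • (xk - xprev)) :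
    f xnext ≤ f xk - (η / 4) * ‖f' xk‖ ^ 2 + (3 / (4 * η)) * ‖xk - xprev‖ ^ 2 := by
  have hL : 0 < L := by linarith [one_div_pos.1 (hη0.trans_le hη)]
  have hLη : L * η ≤ 1 / 4 := by
    rw [le_div_iff₀ (by positivity)] at hη
    linarith
  have hθ : |1 - θ| ≤ 1 := abs_le.2 ⟨by linarith, by linarith⟩
  rw [hstep]
  exact heavyBall_step_le hgrad hlip hL.le hη0 hLη hθ xk (xk - xprev)

/-- One heavy ball step: f(x^{k+1}) ≤ f(x^k) - (η/4)‖∇f(x^k)‖² + (3/(4η))‖x^k - x^{k-1}‖². -/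
theorem stmt_9 {d : ℕ} (f : EuclideanSpace ℝ (Fin d) → ℝ)
    (f' : EuclideanSpace ℝ (Fin d) → EuclideanSpace ℝ (Fin d))
    (L η θ : ℝ) (hL : 0 < L)
    (hgrad : ∀ x, HasGradientAt f (f' x) x)
    (hlip : ∀ x y, ‖f' x - f' y‖ ≤ L * ‖x - y‖)
    (hη0 : 0 < η) (hη : η ≤ 1 / (4 * L))
    (hθ0 : 0 ≤ θ) (hθ1 : θ ≤ 1)
    (xprev xk xnext : EuclideanSpace ℝ (Fin d))
    (hstep : xnext = xk - η • f' xk + (1 - θ) • (xk - xprev)) :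
    f xnext ≤ f xk - (η / 4) * ‖f' xk‖ ^ 2 + (3 / (4 * η)) * ‖xk - xprev‖ ^ 2 :=
  stmt_9_general f f' L η θ hgrad hlip hη0 hη hθ0 hθ1 xprev xk xnext hstep
end
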